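/- Let (Q, ⊲, ⊲̃, ⋄) be a qualgebra, a ∈ Q, and let Q_a be the sub-qualgebra generated by a, i.e., the smallest subset of Q containing a and closed under ⊲, ⊲̃ and ⋄. Then Q_a is trivial: for all x, y ∈ Q_a one has x ⊲ y = x, and moreover the restriction of ⋄ to Q_a is commutative: x ⋄ y = y ⋄ x for all x, y ∈ Q_a. -/

import Mathlib

/-!
The element `a` acts trivially on the sub-qualgebra `Q_a` it generates, because the fixed
points of `· ⊲ a` form a sub-qualgebra containing `a` (idempotence). Next, the elements acting
trivially on `Q_a` form a sub-qualgebra, and it contains `a`, hence all of `Q_a`.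
Commutativity of `⋄` on `Q_a` then follows from `x ⋄ y = y ⋄ (x ⊲ y) = y ⋄ x`.
-/

/-- A subset `T` of a qualgebra is closed under the three operations. -/
def QClosed {Q : Type*} (tri trid dia : Q → Q → Q) (T : Set Q) : Prop :=
  ∀ x ∈ T, ∀ y ∈ T, tri x y ∈ T ∧ trid x y ∈ T ∧ dia x y ∈ T

section Qualgebra

variable {Q : Type*} {tri trid dia : Q → Q → Q}

theorem tri_left_injective (h_inv : ∀ a b, trid (tri a b) b = a) (c : Q) :
    Function.Injective (tri · c) :=
  Function.LeftInverse.injective (g := (trid · c)) fun u => h_inv u c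

theorem qClosed_setOf_tri_eq_self
    (h_sd : ∀ a b c, tri (tri a b) c = tri (tri a c) (tri b c))
    (h_inv : ∀ a b, trid (tri a b) b = a ∧ tri (trid a b) b = a)
    (h_d : ∀ a b c, tri (dia a b) c = dia (tri a c) (tri b c))
    (b : Q) :
    QClosed tri trid dia {x | tri x b = x} := by
  intro u (hu : tri u b = u) v (hv : tri v b = v)
  refine ⟨?_, ?_, ?_⟩
  · show tri (tri u v) b = tri u v
    rw [h_sd, hu, hv]
  · show tri (trid u v) b = trid u v
    apply tri_left_injective (fun a b => (h_inv a b).1) v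
    calc tri (tri (trid u v) b) v = tri (tri (trid u v) b) (tri v b) := by rw [hv]
      _ = tri (tri (trid u v) v) b := (h_sd _ _ _).symm
      _ = tri (trid u v) v := by rw [(h_inv u v).2, hu]
  · show tri (dia u v) b = dia u v
    rw [h_d, hu, hv]

theorem qClosed_setOf_forall_tri_eq_self
    (h_sd : ∀ a b c, tri (tri a b) c = tri (tri a c) (tri b c))
    (h_inv : ∀ a b, trid (tri a b) b = a ∧ tri (trid a b) b = a)
    (h_comp : ∀ a b c, tri a (dia b c) = tri (tri a b) c) (G : Set Q) :
    QClosed tri trid dia {y | ∀ x ∈ G, tri x y = x} := by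
  intro u hu v hv
  refine ⟨fun x hx => ?_, fun x hx => ?_, fun x hx => ?_⟩
  · calc tri x (tri u v) = tri (tri x v) (tri u v) := by rw [hv x hx]
      _ = x := by rw [← h_sd, hu x hx, hv x hx]
  · apply tri_left_injective (fun a b => (h_inv a b).1) v
    calc tri (tri x (trid u v)) v = tri (tri x v) (tri (trid u v) v) := h_sd _ _ _
      _ = tri x v := by rw [(h_inv u v).2, hv x hx, hu x hx]
  · rw [h_comp, hu x hx, hv x hx]

end Qualgebra

/-- In a qualgebra, the sub-qualgebra generated by a single element `a` is trivial
(`x ⊲ y = x` on it) and the restriction of `⋄` to it is commutative. -/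
theorem qualgebra_locally_trivial {Q : Type*} (tri trid dia : Q → Q → Q)
    (h_sd : ∀ a b c, tri (tri a b) c = tri (tri a c) (tri b c))
    (h_inv : ∀ a b, trid (tri a b) b = a ∧ tri (trid a b) b = a)
    (h_idem : ∀ a, tri a a = a)
    (h_comp : ∀ a b c, tri a (dia b c) = tri (tri a b) c)
    (h_d : ∀ a b c, tri (dia a b) c = dia (tri a c) (tri b c))
    (h_comm : ∀ a b, dia a b = dia b (tri a b))
    (a : Q) :
    ∀ x ∈ ⋂₀ {T : Set Q | a ∈ T ∧ QClosed tri trid dia T},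
      ∀ y ∈ ⋂₀ {T : Set Q | a ∈ T ∧ QClosed tri trid dia T},
        tri x y = x ∧ dia x y = dia y x := by
  set gen := ⋂₀ {T : Set Q | a ∈ T ∧ QClosed tri trid dia T}
  have h_fix : ∀ x ∈ gen, tri x a = x := fun x hx =>
    Set.mem_sInter.mp hx {x | tri x a = x} ⟨h_idem a, qClosed_setOf_tri_eq_self h_sd h_inv h_d a⟩
  have h_triv : ∀ y ∈ gen, ∀ x ∈ gen, tri x y = x := fun y hy =>
    Set.mem_sInter.mp hy {y | ∀ x ∈ gen, tri x y = x} ⟨h_fix, qClosed_setOf_forall_tri_eq_self h_sd h_inv h_comp gen⟩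
  intro x hx y hy
  exact ⟨h_triv y hy x hx, by rw [h_comm, h_triv y hy x hx]⟩
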